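/- arXiv:1604.05275 — 5 statements merged into one kernel-verified Lean document; each statement's English description precedes it below -/
import Mathlib

section
/- If α_0 = 1/L, A_k = Σ_{i=0}^k α_i, and α_{k+1} = 1/(2L) + sqrt(1/(4L²) + A_k/L), then A_k ≥ (k+1)²/(4L) for all k ≥ 0. -/
/-- For `L > 0`, if `α 0 = 1/L`, `A k = ∑_{i=0}^k α i`, and
`α (k+1) = 1/(2L) + √(1/(4L²) + A k / L)`, then `A k ≥ (k+1)²/(4L)` for all `k ≥ 0`. -/
theorem stmt1 (L : ℝ) (hL : 0 < L) (α A : ℕ → ℝ)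
    (hα0 : α 0 = 1 / L)
    (hA : ∀ k, A k = ∑ i ∈ Finset.range (k + 1), α i)
    (hrec : ∀ k, α (k + 1) = 1 / (2 * L) + Real.sqrt (1 / (4 * L ^ 2) + A k / L)) :
    ∀ k : ℕ, A k ≥ ((k : ℝ) + 1) ^ 2 / (4 * L) := by
  intro k
  induction k with
  | zero =>
    have : A 0 = 1 / L := by rw [hA 0]; simp [hα0]
    rw [this]
    push_cast
    rw [ge_iff_le, div_le_div_iff₀ (by positivity) hL]
    nlinarith
  | succ n ih =>
    have hstep : A (n + 1) = A n + α (n + 1) := by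
      rw [hA (n + 1), hA n, Finset.sum_range_succ]
    have hAn : 0 ≤ A n / L := by
      have : (0:ℝ) ≤ ((n:ℝ) + 1) ^ 2 / (4 * L) := by positivity
      have := le_trans this ih
      positivity
    have hsq : Real.sqrt (1 / (4 * L ^ 2) + A n / L) ≥ ((n:ℝ) + 1) / (2 * L) := by
      rw [ge_iff_le, show ((n:ℝ) + 1) / (2 * L) = Real.sqrt ((((n:ℝ) + 1) / (2 * L)) ^ 2) from
        (Real.sqrt_sq (by positivity)).symm]
      apply Real.sqrt_le_sqrt
      have h1 : (((n:ℝ) + 1) / (2 * L)) ^ 2 = ((n:ℝ) + 1) ^ 2 / (4 * L) / L := by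
        field_simp; ring
      rw [h1]
      have h2 : ((n:ℝ) + 1) ^ 2 / (4 * L) / L ≤ A n / L := by gcongr
      linarith [one_div_nonneg.mpr (le_of_lt (by positivity : (0:ℝ) < 4 * L ^ 2))]
    rw [hstep, hrec n]
    push_cast
    push_cast at ih
    rw [ge_iff_le, div_le_iff₀ (by positivity)]
    have hs := hsq
    rw [ge_iff_le, div_le_iff₀ (by positivity)] at hs
    rw [ge_iff_le, div_le_iff₀ (by positivity)] at ih
    push_cast at hs
    have h2L : 1 / (2 * L) * (4 * L) = 2 := by field_simp; ring
    nlinarith [hs, ih, h2L]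
end

section
/- Under the recurrence A_{k+1}(1 + A_k μ̃) = α_{k+1}² L with A_{k+1} = A_k + α_{k+1}, A_0 = 1/L, and 0 < μ̃ ≤ L, one has A_k ≥ (1/L)·(1 + (1/2)·sqrt(μ̃/L))^{2k} for all k ≥ 0. -/
lemma stmt3_key (a b s : ℝ) (ha : 0 < a) (hab : a ≤ b) (hs : 0 < s) (hs1 : s ≤ 1)
    (h : (b - a)^2 ≥ a * b * s^2) : b ≥ a * (1 + s/2)^2 := by
  nlinarith [sq_nonneg (b - a - a*s), sq_nonneg (b - a), mul_pos ha hs,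
    sq_nonneg (b - a*(1+s/2)^2), mul_pos (mul_pos ha hs) hs]

/-- Under the recurrence `A (k+1) * (1 + A k * μ̃) = (α (k+1))² * L`
with `A (k+1) = A k + α (k+1)`, `A 0 = α 0 = 1/L`,
`α (k+1) = (1 + A k μ̃)/(2L) + √((1 + A k μ̃)²/(4L²) + A k (1 + A k μ̃)/L)`,
and `0 < μ̃ ≤ L`, one has `A k ≥ (1/L) * (1 + (1/2)√(μ̃/L))^(2k)` for all `k ≥ 0`. -/
theorem stmt3 (L μt : ℝ) (hL : 0 < L) (hμ : 0 < μt) (hμL : μt ≤ L) (α A : ℕ → ℝ)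
    (hα0 : α 0 = 1 / L) (hA0 : A 0 = α 0)
    (hrec : ∀ k, α (k + 1) =
      (1 + A k * μt) / (2 * L) +
        Real.sqrt ((1 + A k * μt) ^ 2 / (4 * L ^ 2) + A k * (1 + A k * μt) / L))
    (hA : ∀ k, A (k + 1) = A k + α (k + 1))
    (hmain : ∀ k, A (k + 1) * (1 + A k * μt) = (α (k + 1)) ^ 2 * L) :
    ∀ k : ℕ, A k ≥ (1 / L) * (1 + (1 / 2) * Real.sqrt (μt / L)) ^ (2 * k) := by
  set s : ℝ := Real.sqrt (μt / L) with hs_def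
  have hsL : 0 < μt / L := div_pos hμ hL
  have hs0 : 0 < s := Real.sqrt_pos.mpr hsL
  have hs2 : s ^ 2 = μt / L := Real.sq_sqrt hsL.le
  have hs1 : s ≤ 1 := by
    rw [show (1:ℝ) = Real.sqrt 1 by simp]
    exact Real.sqrt_le_sqrt (by rw [div_le_one hL]; exact hμL)
  intro k
  induction k with
  | zero => simp [hA0, hα0]
  | succ n ih =>
    have hpos : 0 < A n := lt_of_lt_of_le (by positivity) ih
    have h1 : 0 < 1 + A n * μt := by positivity
    have hα : 0 < α (n + 1) := by
      rw [hrec n]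
      have : 0 ≤ Real.sqrt ((1 + A n * μt) ^ 2 / (4 * L ^ 2) + A n * (1 + A n * μt) / L) :=
        Real.sqrt_nonneg _
      positivity
    have hab : A n ≤ A (n + 1) := by rw [hA n]; linarith
    have hsq : (A (n+1) - A n)^2 ≥ A n * A (n+1) * s^2 := by
      have hαe : α (n+1) = A (n+1) - A n := by rw [hA n]; ring
      have h2 : (A (n+1) - A n)^2 * L = A (n+1) * (1 + A n * μt) := by
        have := (hmain n).symm; rw [hαe] at this; exact this
      have h3 : A (n+1) * (1 + A n * μt) ≥ A (n+1) * (A n * μt) := by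
        have : 0 < A (n+1) := lt_of_lt_of_le hpos hab
        nlinarith
      rw [hs2]
      have heq : A n * A (n+1) * (μt / L) = (A n * A (n+1) * μt) / L := by ring
      rw [ge_iff_le, heq, div_le_iff₀ hL]
      nlinarith
    have hstep : A (n+1) ≥ A n * (1 + s/2)^2 := stmt3_key _ _ _ hpos hab hs0 hs1 hsq
    have hgeo : (0:ℝ) ≤ (1 + (1/2) * s) := by positivity
    calc A (n+1) ≥ A n * (1 + s/2)^2 := hstep
      _ ≥ (1 / L * (1 + 1/2 * s) ^ (2*n)) * (1 + s/2)^2 := by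
          apply mul_le_mul_of_nonneg_right ih (by positivity)
      _ = 1 / L * (1 + 1/2 * s) ^ (2*(n+1)) := by ring
end

section
/- Suppose f : E → ℝ is differentiable with ν-Hölder continuous gradient: ‖∇f(y) − ∇f(x)‖ ≤ L_ν ‖y − x‖^ν for all x, y, where ν ∈ [0,1]. Then for every δ > 0 and all x, y: f(x) ≤ f(y) + ⟨∇f(y), x − y⟩ + (L/2)‖x − y‖² + δ, where L = L_ν · ((L_ν/(2δ)) · (1−ν)/(1+ν))^{(1−ν)/(1+ν)} (interpreted as L = L_1 when ν = 1). -/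
open RealInnerProductSpace

/-!
Along the segment from `y` to `x`, the Hölder bound on the gradient integrates to
`f x ≤ f y + ⟪g y, x - y⟫ + Lν / (1 + ν) * ‖x - y‖ ^ (1 + ν)`. Writing
`‖x - y‖ ^ (1 + ν) = (‖x - y‖ ^ 2) ^ θ` with `θ = (1 + ν) / 2`, weighted AM-GM with weights
`θ, 1 - θ` trades this power for a multiple of `‖x - y‖ ^ 2` plus a constant; the scale in the
AM-GM is chosen so that the constant is exactly `δ`, which produces the stated `L`.
-/

theorem rpow_le_mul_add {θ K w : ℝ} (hθ0 : 0 < θ) (hθ1 : θ ≤ 1) (hK : 0 < K) (hw : 0 ≤ w) :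
    w ^ θ ≤ θ * K ^ ((1 - θ) / θ) * w + (1 - θ) / K := by
  have hamgm := Real.geom_mean_le_arith_mean2_weighted (p₁ := K ^ ((1 - θ) / θ) * w)
    (p₂ := K⁻¹) hθ0.le (sub_nonneg.2 hθ1)
    (mul_nonneg (Real.rpow_nonneg hK.le _) hw) (inv_nonneg.2 hK.le) (add_sub_cancel θ 1)
  have hprod : (K ^ ((1 - θ) / θ) * w) ^ θ * K⁻¹ ^ (1 - θ) = w ^ θ := by
    rw [Real.mul_rpow (Real.rpow_nonneg hK.le _) hw, ← Real.rpow_mul hK.le,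
      div_mul_cancel₀ _ hθ0.ne', Real.inv_rpow hK.le]
    field_simp [(Real.rpow_pos_of_pos hK (1 - θ)).ne']
  rw [hprod] at hamgm
  calc w ^ θ ≤ θ * (K ^ ((1 - θ) / θ) * w) + (1 - θ) * K⁻¹ := hamgm
    _ = _ := by ring

theorem mul_rpow_le_mul_add {θ A δ w : ℝ} (hθ0 : 0 < θ) (hθ1 : θ ≤ 1) (hA : 0 < A) (hδ : 0 < δ)
    (hw : 0 ≤ w) :
    A * w ^ θ ≤ θ * A * ((1 - θ) * A / δ) ^ ((1 - θ) / θ) * w + δ := by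
  rcases hθ1.eq_or_lt with rfl | hθ1
  · simpa using hδ.le
  have hK : 0 < (1 - θ) * A / δ := by have := sub_pos.2 hθ1; positivity
  calc A * w ^ θ
      ≤ A * (θ * ((1 - θ) * A / δ) ^ ((1 - θ) / θ) * w + (1 - θ) / ((1 - θ) * A / δ)) :=
        mul_le_mul_of_nonneg_left (rpow_le_mul_add hθ0 hθ1.le hK hw) hA.le
    _ = _ := by field_simp [(sub_pos.2 hθ1).ne']

theorem le_add_deriv_add_of_deriv_sub_le {φ φ' : ℝ → ℝ} {C ν : ℝ} (hν : 0 ≤ ν)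
    (hφ : ∀ t, HasDerivAt φ (φ' t) t) (hφ' : ∀ t ∈ Set.Ioo (0 : ℝ) 1, φ' t - φ' 0 ≤ C * t ^ ν) :
    φ 1 ≤ φ 0 + φ' 0 + C / (1 + ν) := by
  set F : ℝ → ℝ := fun t ↦ φ t - φ' 0 * t - C / (1 + ν) * t ^ (1 + ν)
  have hF : ∀ t, HasDerivAt F (φ' t - φ' 0 - C * t ^ ν) t := by
    intro t
    have hpow : HasDerivAt (fun s : ℝ ↦ s ^ (1 + ν)) ((1 + ν) * t ^ ν) t := by
      simpa using Real.hasDerivAt_rpow_const (x := t) (p := 1 + ν) (Or.inr (by linarith))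
    refine (((hφ t).sub ((hasDerivAt_id t).const_mul (φ' 0))).sub
      (hpow.const_mul (C / (1 + ν)))).congr_deriv ?_
    field_simp
  have hanti : AntitoneOn F (Set.Icc 0 1) :=
    antitoneOn_of_hasDerivWithinAt_nonpos (convex_Icc 0 1)
      (fun t _ ↦ (hF t).continuousAt.continuousWithinAt) (fun t _ ↦ (hF t).hasDerivWithinAt)
      (fun t ht ↦ by rw [interior_Icc] at ht; linarith [hφ' t ht])
  have hF10 := hanti (Set.left_mem_Icc.2 zero_le_one) (Set.right_mem_Icc.2 zero_le_one) zero_le_one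
  simp only [F, mul_one, Real.one_rpow, mul_zero, sub_zero,
    Real.zero_rpow (by linarith : 1 + ν ≠ 0), tsub_le_iff_right] at hF10
  linarith

theorem le_add_inner_add_rpow_of_holder_gradient {E : Type*} [NormedAddCommGroup E]
    [InnerProductSpace ℝ E] [CompleteSpace E] {f : E → ℝ} {g : E → E}
    (hf : ∀ x, HasGradientAt f (g x) x) {ν Lν : ℝ} (hν : 0 ≤ ν)
    (hHolder : ∀ x y : E, ‖g y - g x‖ ≤ Lν * ‖y - x‖ ^ ν) (x y : E) :
    f x ≤ f y + ⟪g y, x - y⟫ + Lν / (1 + ν) * ‖x - y‖ ^ (1 + ν) := by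
  set v := x - y
  have hφ : ∀ t : ℝ, HasDerivAt (fun t : ℝ ↦ f (y + t • v)) ⟪g (y + t • v), v⟫ t := by
    intro t
    have hline : HasDerivAt (fun t : ℝ ↦ y + t • v) v t := by
      simpa using ((hasDerivAt_id t).smul_const v).const_add y
    have h := (hf (y + t • v)).hasFDerivAt.comp_hasDerivAt t hline
    rw [InnerProductSpace.toDual_apply_apply] at h
    exact h
  have hbound : ∀ t ∈ Set.Ioo (0 : ℝ) 1,
      ⟪g (y + t • v), v⟫ - ⟪g (y + (0 : ℝ) • v), v⟫ ≤ Lν * ‖v‖ ^ (1 + ν) * t ^ ν := by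
    rintro t ⟨ht, -⟩
    calc ⟪g (y + t • v), v⟫ - ⟪g (y + (0 : ℝ) • v), v⟫
        = ⟪g (y + t • v) - g y, v⟫ := by simp [inner_sub_left]
      _ ≤ ‖g (y + t • v) - g y‖ * ‖v‖ := real_inner_le_norm _ _
      _ ≤ Lν * ‖(y + t • v) - y‖ ^ ν * ‖v‖ :=
        mul_le_mul_of_nonneg_right (hHolder _ _) (norm_nonneg v)
      _ = Lν * ‖v‖ ^ (1 + ν) * t ^ ν := by
        rw [add_sub_cancel_left, norm_smul, Real.norm_of_nonneg ht.le,
          Real.mul_rpow ht.le (norm_nonneg v), Real.rpow_add' (norm_nonneg v) (by linarith),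
          Real.rpow_one]
        ring
  have hseg := le_add_deriv_add_of_deriv_sub_le hν hφ hbound
  simp only [zero_smul, add_zero, one_smul] at hseg
  rw [show y + v = x by simp [v]] at hseg
  linarith [show Lν * ‖v‖ ^ (1 + ν) / (1 + ν) = Lν / (1 + ν) * ‖v‖ ^ (1 + ν) by ring]

/-- If `f : E → ℝ` is differentiable with `ν`-Hölder continuous gradient,
`‖∇f y - ∇f x‖ ≤ L_ν ‖y - x‖^ν` for all `x, y`, `ν ∈ [0,1]`, then for every `δ > 0`
and all `x, y`: `f x ≤ f y + ⟪∇f y, x - y⟫ + (L/2)‖x - y‖² + δ`, where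
`L = L_ν * ((L_ν/(2δ)) * (1-ν)/(1+ν))^((1-ν)/(1+ν))`. -/
theorem stmt6 {E : Type*} [NormedAddCommGroup E] [InnerProductSpace ℝ E] [CompleteSpace E]
    (f : E → ℝ) (g : E → E) (hf : ∀ x, HasGradientAt f (g x) x)
    (ν Lν : ℝ) (hν : ν ∈ Set.Icc (0 : ℝ) 1) (hLν : 0 < Lν)
    (hHolder : ∀ x y : E, ‖g y - g x‖ ≤ Lν * ‖y - x‖ ^ ν) :
    ∀ δ : ℝ, 0 < δ → ∀ x y : E,
      f x ≤ f y + ⟪g y, x - y⟫ +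
        (Lν * ((Lν / (2 * δ)) * ((1 - ν) / (1 + ν))) ^ ((1 - ν) / (1 + ν)) / 2) *
          ‖x - y‖ ^ 2 + δ := by
  intro δ hδ x y
  obtain ⟨hν0, hν1⟩ := hν
  have h1ν : 0 < 1 + ν := by linarith
  have hyoung := mul_rpow_le_mul_add (θ := (1 + ν) / 2) (A := Lν / (1 + ν)) (by positivity)
    (by linarith) (by positivity) hδ (sq_nonneg ‖x - y‖)
  have hpow : (‖x - y‖ ^ 2) ^ ((1 + ν) / 2) = ‖x - y‖ ^ (1 + ν) := by
    rw [← Real.rpow_natCast, ← Real.rpow_mul (norm_nonneg _)]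
    congr 1
    push_cast
    ring
  have hexp : (1 - (1 + ν) / 2) / ((1 + ν) / 2) = (1 - ν) / (1 + ν) := by field_simp; ring
  have hbase : (1 - (1 + ν) / 2) * (Lν / (1 + ν)) / δ = Lν / (2 * δ) * ((1 - ν) / (1 + ν)) := by
    field_simp; ring
  rw [hpow, hexp, hbase] at hyoung
  have hcoef : (1 + ν) / 2 * (Lν / (1 + ν)) = Lν / 2 := by field_simp
  rw [hcoef] at hyoung
  linarith [le_add_inner_add_rpow_of_holder_gradient hf hν0 hHolder x y]
end

section
/- If A := (1/n²)·tr(M) for a symmetric positive semidefinite n×n matrix M and μ₁ denotes the strong convexity constant of f(x) = (1/2)xᵀMx − bᵀx in the ℓ₁-norm, then μ₁ ≤ (1/n²)tr(M) ≤ (1/n)·max_{i,j}|M_{ij}|, and since the Lipschitz constant of ∇f in the ℓ₁-norm is L₁ = max_{i,j}|M_{ij}|, the condition number satisfies L₁/μ₁ ≥ n. -/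
/-!
Averaging the quadratic form over the `2ⁿ` vectors with entries `±1/n`, all of ℓ₁-norm one,
kills the off-diagonal entries of `M` (the signs of two distinct coordinates are uncorrelated)
and leaves `tr M / n²`; so the minimum `μ₁` over the ℓ₁-sphere is at most this average, which in
turn is at most `n · max |Mᵢᵢ| / n²`.
-/

open Matrix Finset

variable {ι : Type*}

noncomputable def signVec (σ : ι → Bool) : ι → ℝ := fun i => if σ i then 1 else -1

lemma signVec_mul_self (σ : ι → Bool) (i : ι) : signVec σ i * signVec σ i = 1 := by
  unfold signVec; split_ifs <;> norm_num

lemma abs_signVec (σ : ι → Bool) (i : ι) : |signVec σ i| = 1 := by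
  unfold signVec; split_ifs <;> norm_num

lemma sum_signVec_mul_signVec_of_ne [Fintype ι] [DecidableEq ι] {i j : ι} (hij : i ≠ j) :
    ∑ σ : ι → Bool, signVec σ i * signVec σ j = 0 := by
  let flip : (ι → Bool) → (ι → Bool) := fun σ => Function.update σ i (!σ i)
  have hflip : Function.Involutive flip := fun σ => by simp [flip]
  have hodd : ∀ σ, signVec σ i * signVec σ j = -(signVec (flip σ) i * signVec (flip σ) j) := by
    intro σ
    simp only [flip, signVec, Function.update_self, Function.update_of_ne hij.symm]
    cases σ i <;> cases σ j <;> norm_num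
  rw [← self_eq_neg, ← sum_neg_distrib]
  exact Fintype.sum_equiv hflip.toPerm _ _ hodd

lemma sum_signVec_mul_signVec [Fintype ι] [DecidableEq ι] (i j : ι) :
    ∑ σ : ι → Bool, signVec σ i * signVec σ j = if i = j then 2 ^ Fintype.card ι else 0 := by
  split_ifs with hij
  · subst hij
    simp [signVec_mul_self]
  · exact sum_signVec_mul_signVec_of_ne hij

lemma sum_signVec_dotProduct_mulVec [Fintype ι] [DecidableEq ι] (M : Matrix ι ι ℝ) :
    ∑ σ : ι → Bool, signVec σ ⬝ᵥ M *ᵥ signVec σ = 2 ^ Fintype.card ι * M.trace := by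
  calc ∑ σ : ι → Bool, signVec σ ⬝ᵥ M *ᵥ signVec σ
      = ∑ i, ∑ j, M i j * ∑ σ : ι → Bool, signVec σ i * signVec σ j := by
        simp only [dotProduct, mulVec, mul_sum]
        rw [sum_comm]
        refine sum_congr rfl fun i _ => ?_
        rw [sum_comm]
        refine sum_congr rfl fun j _ => sum_congr rfl fun σ _ => by ring
    _ = 2 ^ Fintype.card ι * M.trace := by
        simp [sum_signVec_mul_signVec, trace, mul_sum, mul_comm]

lemma card_sq_mul_le_trace [Fintype ι] [DecidableEq ι] [Nonempty ι] {M : Matrix ι ι ℝ} {μ : ℝ}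
    (hμ : ∀ v : ι → ℝ, ∑ i, |v i| = 1 → μ ≤ v ⬝ᵥ M *ᵥ v) :
    (Fintype.card ι : ℝ) ^ 2 * μ ≤ M.trace := by
  set n : ℝ := (Fintype.card ι : ℝ)
  have hn : 0 < n := by simp [n, Fintype.card_pos]
  have hsign : ∀ σ : ι → Bool, n ^ 2 * μ ≤ signVec σ ⬝ᵥ M *ᵥ signVec σ := by
    intro σ
    have hnorm : ∑ i, |(n⁻¹ • signVec σ) i| = 1 := by
      simp [abs_signVec, abs_of_pos hn, n]
    have hscaled := hμ _ hnorm
    rw [mulVec_smul, smul_dotProduct, dotProduct_smul, smul_smul, smul_eq_mul] at hscaled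
    calc n ^ 2 * μ ≤ n ^ 2 * (n⁻¹ * n⁻¹ * (signVec σ ⬝ᵥ M *ᵥ signVec σ)) := by gcongr
      _ = signVec σ ⬝ᵥ M *ᵥ signVec σ := by field_simp
  have hsum := card_nsmul_le_sum univ _ _ fun σ _ => hsign σ
  rw [sum_signVec_dotProduct_mulVec, card_univ, Fintype.card_fun, Fintype.card_bool,
    nsmul_eq_mul, Nat.cast_pow, Nat.cast_ofNat] at hsum
  exact le_of_mul_le_mul_left hsum (by positivity)

lemma trace_le_card_mul [Fintype ι] {M : Matrix ι ι ℝ} {L : ℝ} (hL : ∀ i, M i i ≤ L) :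
    M.trace ≤ Fintype.card ι * L := by
  simpa [trace] using sum_le_card_nsmul univ (fun i => M i i) L fun i _ => hL i

theorem stmt13_general (n : ℕ) (hn : 0 < n) (M : Matrix (Fin n) (Fin n) ℝ)
    (μ1 L1 : ℝ) (hμpos : 0 < μ1)
    (hμ : ∀ v : Fin n → ℝ, (∑ i, |v i|) = 1 → μ1 ≤ v ⬝ᵥ M.mulVec v)
    (hL : ∀ i j, |M i j| ≤ L1) :
    μ1 ≤ (1 / (n : ℝ) ^ 2) * M.trace ∧
    (1 / (n : ℝ) ^ 2) * M.trace ≤ (1 / (n : ℝ)) * L1 ∧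
    (n : ℝ) ≤ L1 / μ1 := by
  have : Nonempty (Fin n) := ⟨⟨0, hn⟩⟩
  have hn' : (0 : ℝ) < n := by exact_mod_cast hn
  have hlower : (n : ℝ) ^ 2 * μ1 ≤ M.trace := by
    simpa using card_sq_mul_le_trace hμ
  have hupper : M.trace ≤ n * L1 := by
    simpa using trace_le_card_mul fun i => (le_abs_self _).trans (hL i i)
  have hcond : n * μ1 ≤ L1 := by nlinarith
  refine ⟨?_, ?_, (le_div_iff₀ hμpos).2 (by linarith)⟩
  · rw [one_div_mul_eq_div, le_div_iff₀ (by positivity)]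
    linarith
  · rw [one_div_mul_eq_div, one_div_mul_eq_div, div_le_div_iff₀ (by positivity) hn']
    nlinarith

/-- For `M` a symmetric positive semidefinite `n × n` real matrix, if
`μ₁` is the ℓ₁-strong-convexity constant of `f(x) = (1/2)xᵀMx - bᵀx`, i.e. a lower
bound `μ₁ ≤ ⟨v, Mv⟩` over all `v` with `‖v‖₁ = 1`, and `L₁` upper-bounds `|M i j|`
(the ℓ₁-Lipschitz constant of `∇f`), then
`μ₁ ≤ (1/n²) tr M ≤ (1/n) L₁`, and hence `L₁/μ₁ ≥ n` (for `μ₁ > 0`). -/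
theorem stmt13 (n : ℕ) (hn : 0 < n) (M : Matrix (Fin n) (Fin n) ℝ)
    (hsymm : M.IsSymm) (hpsd : M.PosSemidef)
    (μ1 L1 : ℝ) (hμpos : 0 < μ1)
    (hμ : ∀ v : Fin n → ℝ, (∑ i, |v i|) = 1 → μ1 ≤ v ⬝ᵥ M.mulVec v)
    (hL : ∀ i j, |M i j| ≤ L1) :
    μ1 ≤ (1 / (n : ℝ) ^ 2) * M.trace ∧
    (1 / (n : ℝ) ^ 2) * M.trace ≤ (1 / (n : ℝ)) * L1 ∧
    (n : ℝ) ≤ L1 / μ1 :=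
  stmt13_general n hn M μ1 L1 hμpos hμ hL
end

section
/- Consider the inexact estimate sequence: suppose A_k F(x^k) ≤ φ_k* + A_k ε for step k (induction hypothesis), φ_{k+1} is obtained from φ_k by adding α_{k+1}[f(y^{k+1}) + ⟨∇f(y^{k+1}), x − y^{k+1}⟩ + h(x)], and the inexact descent condition f(x^{k+1}) ≤ f(y^{k+1}) + ⟨∇f(y^{k+1}), x^{k+1} − y^{k+1}⟩ + (L_{k+1}/2)‖x^{k+1} − y^{k+1}‖² + (α_{k+1}/A_{k+1})ε holds with A_{k+1}/α_{k+1}² = L_{k+1}. Then A_{k+1}F(x^{k+1}) ≤ φ_{k+1}* + A_{k+1}ε. Consequently F(x^N) − F_* ≤ R²/A_N + ε. -/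
/-!
A step of the method with weights `a = A_k`, `α = α_{k+1}`, `A' = a + α` combines three
inequalities weighted by `a` and `α`: the induction hypothesis at `x^k` together with the lower
linear model of `f` at `y^{k+1}`, the descent condition at `x^{k+1}`, and convexity of `h` along
`A' x^{k+1} = a x^k + α u^{k+1}`. Since `A'(x^{k+1} - y^{k+1}) = α (u^{k+1} - u^k)` and
`A' = α² L`, the quadratic term of the descent condition is exactly the `½‖u^{k+1} - u^k‖²`
gained from strong convexity of `φ_k` at its minimiser `u^k`. The base case is the same step with
`a = 0`, `u^{-1} = y^0` and `V ≥ ½‖· - y^0‖²` in place of strong convexity. Evaluating `φ_N ≤ V + A_N F` at `x_*` gives the rate.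
-/

open RealInnerProductSpace

section EstimateSequence

variable {E : Type*} [NormedAddCommGroup E] [InnerProductSpace ℝ E]

theorem ConvexOn.mul_le_of_smul_eq {Q : Set E} {h : E → ℝ} (hh : ConvexOn ℝ Q h)
    {a b : ℝ} {x z w : E} (hx : x ∈ Q) (hz : z ∈ Q) (ha : 0 ≤ a) (hb : 0 ≤ b)
    (hab : 0 < a + b) (hw : (a + b) • w = a • x + b • z) :
    (a + b) * h w ≤ a * h x + b * h z := by
  have hw' : w = (a / (a + b)) • x + (b / (a + b)) • z := by
    rw [div_eq_inv_mul, div_eq_inv_mul, mul_smul, mul_smul, ← smul_add, ← hw,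
      inv_smul_smul₀ hab.ne']
  have hconv := hh.2 hx hz (div_nonneg ha hab.le) (div_nonneg hb hab.le)
    (by rw [← add_div, div_self hab.ne'])
  rw [← hw', smul_eq_mul, smul_eq_mul] at hconv
  calc (a + b) * h w ≤ (a + b) * (a / (a + b) * h x + b / (a + b) * h z) :=
        mul_le_mul_of_nonneg_left hconv hab.le
    _ = a * h x + b * h z := by field_simp

theorem mul_half_mul_norm_sq_eq {c α L : ℝ} {v w : E} (hc : c ≠ 0)
    (hcv : c • v = α • w) (hL : c = α ^ 2 * L) :
    c * (L / 2 * ‖v‖ ^ 2) = 1 / 2 * ‖w‖ ^ 2 := by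
  have hnorm : c ^ 2 * ‖v‖ ^ 2 = α ^ 2 * ‖w‖ ^ 2 := by
    have := congrArg (fun u => ‖u‖ ^ 2) hcv
    simpa only [norm_smul, Real.norm_eq_abs, mul_pow, sq_abs] using this
  apply mul_left_cancel₀ hc
  linear_combination (L / 2) * hnorm - (‖w‖ ^ 2 / 2) * hL

theorem mul_inner_sub_eq_of_smul_eq {a b : ℝ} {g x y z w : E}
    (hw : (a + b) • w = a • x + b • z) :
    (a + b) * ⟪g, w - y⟫ = a * ⟪g, x - y⟫ + b * ⟪g, z - y⟫ := by
  have hg := congrArg (⟪g, ·⟫) hw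
  simp only [inner_add_right, real_inner_smul_right] at hg
  simp only [inner_sub_right]
  linear_combination hg

theorem estimate_sequence_step {Q : Set E} {f h : E → ℝ} (hh : ConvexOn ℝ Q h)
    {a α A' L ε m Φ : ℝ} {g x y u u' x' : E}
    (ha : 0 ≤ a) (hα : 0 < α) (hA' : A' = a + α) (hAL : A' = α ^ 2 * L)
    (hx : x ∈ Q) (hu' : u' ∈ Q)
    (hy : A' • y = α • u + a • x) (hx' : A' • x' = α • u' + a • x)
    (hlin : f y + ⟪g, x - y⟫ ≤ f x)
    (hdesc : f x' ≤ f y + ⟪g, x' - y⟫ + L / 2 * ‖x' - y‖ ^ 2 + α / A' * ε)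
    (hprev : a * (f x + h x) ≤ m + a * ε)
    (hΦ : m + 1 / 2 * ‖u' - u‖ ^ 2 ≤ Φ) :
    A' * (f x' + h x') ≤ Φ + α * (f y + ⟪g, u' - y⟫ + h u') + A' * ε := by
  subst hA'
  have hpos : 0 < a + α := by positivity
  rw [add_comm (α • u')] at hx'
  rw [add_comm (α • u)] at hy
  have hquad := mul_half_mul_norm_sq_eq (v := x' - y) (w := u' - u) hpos.ne'
    (by rw [smul_sub, smul_sub, hx', hy]; abel) hAL
  have hconv := hh.mul_le_of_smul_eq hx hu' ha hα.le hpos hx'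
  have hinner := mul_inner_sub_eq_of_smul_eq (g := g) (y := y) hx'
  have hdesc' := mul_le_mul_of_nonneg_left hdesc hpos.le
  have hlin' := mul_le_mul_of_nonneg_left hlin ha
  have herr : (a + α) * (α / (a + α) * ε) = α * ε := by field_simp
  linarith

theorem estimate_le_add_mul_objective {Q : Set E} {f h V : E → ℝ} {gf : E → E} {α A : ℕ → ℝ}
    {y : ℕ → E} {φ : ℕ → E → ℝ} (hfconv : ∀ y ∈ Q, ∀ w ∈ Q, f y + ⟪gf y, w - y⟫ ≤ f w)
    (hα : ∀ k, 0 ≤ α k) (hA0 : A 0 = α 0) (hArec : ∀ k, A (k + 1) = A k + α (k + 1))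
    (hyQ : ∀ k, y k ∈ Q)
    (hφ0 : ∀ w, φ 0 w = V w + α 0 * (f (y 0) + ⟪gf (y 0), w - y 0⟫ + h w))
    (hφrec : ∀ k w, φ (k + 1) w =
      φ k w + α (k + 1) * (f (y (k + 1)) + ⟪gf (y (k + 1)), w - y (k + 1)⟫ + h w))
    {w : E} (hw : w ∈ Q) (k : ℕ) :
    φ k w ≤ V w + A k * (f w + h w) := by
  have hmodel (j : ℕ) : α j * (f (y j) + ⟪gf (y j), w - y j⟫ + h w) ≤ α j * (f w + h w) :=
    mul_le_mul_of_nonneg_left (by linarith [hfconv _ (hyQ j) w hw]) (hα j)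
  induction k with
  | zero => rw [hφ0, hA0]; linarith [hmodel 0]
  | succ k ih => rw [hφrec, hArec]; linarith [hmodel (k + 1)]

end EstimateSequence

theorem pos_of_pos_increments {α A : ℕ → ℝ} (hα : ∀ k, 0 < α k) (hA0 : A 0 = α 0)
    (hArec : ∀ k, A (k + 1) = A k + α (k + 1)) (k : ℕ) : 0 < A k := by
  induction k with
  | zero => rw [hA0]; exact hα 0
  | succ k ih => rw [hArec]; exact add_pos ih (hα (k + 1))

theorem sub_le_div_add_of_mul_le {A F Fstar p R ε : ℝ} (hA : 0 < A)
    (hF : A * F ≤ p + A * ε) (hp : p ≤ R + A * Fstar) :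
    F - Fstar ≤ R / A + ε := by
  rw [div_add' _ _ _ hA.ne', le_div_iff₀ hA]
  linarith
theorem stmt15_general {E : Type*} [NormedAddCommGroup E] [InnerProductSpace ℝ E]
    (Q : Set E) (f h : E → ℝ) (gf : E → E) (ε : ℝ)
    (hfconv : ∀ y ∈ Q, ∀ w ∈ Q, f y + ⟪gf y, w - y⟫ ≤ f w)
    (hhconv : ConvexOn ℝ Q h)
    (V : E → ℝ)
    (α A Lc : ℕ → ℝ) (hαpos : ∀ k, 0 < α k)
    (hA0 : A 0 = α 0) (hArec : ∀ k, A (k + 1) = A k + α (k + 1))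
    (hAL : ∀ k, A k = (α k) ^ 2 * Lc k)
    (u x y : ℕ → E) (huQ : ∀ k, u k ∈ Q) (hxQ : ∀ k, x k ∈ Q) (hyQ : ∀ k, y k ∈ Q)
    (hVsc : ∀ w, (1 / 2) * ‖w - y 0‖ ^ 2 ≤ V w)
    (φ : ℕ → E → ℝ)
    (hφ0 : ∀ w, φ 0 w = V w + α 0 * (f (y 0) + ⟪gf (y 0), w - y 0⟫ + h w))
    (hφrec : ∀ k w, φ (k + 1) w =
      φ k w + α (k + 1) * (f (y (k + 1)) + ⟪gf (y (k + 1)), w - y (k + 1)⟫ + h w))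
    (humin : ∀ k, ∀ w ∈ Q, φ k (u k) ≤ φ k w)
    (hφsc : ∀ k, ∀ w ∈ Q, φ k (u k) + (1 / 2) * ‖w - u k‖ ^ 2 ≤ φ k w)
    (hx0 : x 0 = u 0)
    (hy : ∀ k, y (k + 1) = (A (k + 1))⁻¹ • (α (k + 1) • u k + A k • x k))
    (hx : ∀ k, x (k + 1) = (A (k + 1))⁻¹ • (α (k + 1) • u (k + 1) + A k • x k))
    (hdesc0 : f (x 0) ≤ f (y 0) + ⟪gf (y 0), x 0 - y 0⟫ +
      Lc 0 / 2 * ‖x 0 - y 0‖ ^ 2 + (α 0 / A 0) * ε)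
    (hdesc : ∀ k, f (x (k + 1)) ≤ f (y (k + 1)) +
      ⟪gf (y (k + 1)), x (k + 1) - y (k + 1)⟫ +
      Lc (k + 1) / 2 * ‖x (k + 1) - y (k + 1)‖ ^ 2 + (α (k + 1) / A (k + 1)) * ε)
    (xstar : E) (hxstar : xstar ∈ Q) (R2 : ℝ) (hR2 : R2 = V xstar) :
    (∀ k, A k * (f (x k) + h (x k)) ≤ φ k (u k) + A k * ε) ∧
    (∀ N, (f (x N) + h (x N)) - (f xstar + h xstar) ≤ R2 / A N + ε) := by
  have hA := pos_of_pos_increments hαpos hA0 hArec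
  have hbound (k : ℕ) : A k * (f (x k) + h (x k)) ≤ φ k (u k) + A k * ε := by
    induction k with
    | zero =>
      rw [hφ0]
      refine estimate_sequence_step hhconv (u := y 0) (m := 0) le_rfl (hαpos 0) (by rw [hA0, zero_add])
        (hAL 0) (hxQ 0) (huQ 0) (by rw [hA0, zero_smul, add_zero])
        (by rw [hA0, hx0, zero_smul, add_zero]) (hfconv _ (hyQ 0) _ (hxQ 0)) hdesc0
        (by simp) (by simpa using hVsc (u 0))
    | succ k ih =>
      rw [hφrec]
      exact estimate_sequence_step hhconv (hA k).le (hαpos _) (hArec k) (hAL _) (hxQ k) (huQ _)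
        ((eq_inv_smul_iff₀ (hA _).ne').mp (hy k)) ((eq_inv_smul_iff₀ (hA _).ne').mp (hx k))
        (hfconv _ (hyQ _) _ (hxQ k)) (hdesc k) ih (hφsc k _ (huQ _))
  refine ⟨hbound, fun N => sub_le_div_add_of_mul_le (hA N) (hbound N) ?_⟩
  rw [hR2]
  exact (humin N xstar hxstar).trans <| estimate_le_add_mul_objective hfconv (fun k => (hαpos k).le)
    hA0 hArec hyQ hφ0 hφrec hxstar N

/-- inexact estimate sequence for the adaptive similar-triangles method:
with estimate functions `φ_k` built from a 1-strongly-convex Bregman divergence `V(·,y⁰)`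
plus linearizations, steps `y^{k+1} = (α_{k+1}u^k + A_k x^k)/A_{k+1}`,
`x^{k+1} = (α_{k+1}u^{k+1} + A_k x^k)/A_{k+1}`, `A_{k+1} = α_{k+1}² L_{k+1}`, and the
inexact descent condition
`f(x^{k+1}) ≤ f(y^{k+1}) + ⟪∇f(y^{k+1}), x^{k+1}-y^{k+1}⟫ + (L_{k+1}/2)‖x^{k+1}-y^{k+1}‖² + (α_{k+1}/A_{k+1})ε`,
the inexact estimate-sequence bound propagates:
`A_k F(x^k) ≤ φ_k* + A_k ε` for all `k`; consequently `F(x^N) - F_* ≤ R²/A_N + ε`. -/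
theorem stmt15 {E : Type*} [NormedAddCommGroup E] [InnerProductSpace ℝ E]
    (Q : Set E) (hQ : Convex ℝ Q) (f h : E → ℝ) (gf : E → E) (ε : ℝ) (hε : 0 < ε)
    (hfconv : ∀ y ∈ Q, ∀ w ∈ Q, f y + ⟪gf y, w - y⟫ ≤ f w)
    (hhconv : ConvexOn ℝ Q h)
    (V : E → ℝ) (hV0 : ∀ w, 0 ≤ V w)
    (α A Lc : ℕ → ℝ) (hαpos : ∀ k, 0 < α k)
    (hA0 : A 0 = α 0) (hArec : ∀ k, A (k + 1) = A k + α (k + 1))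
    (hAL : ∀ k, A k = (α k) ^ 2 * Lc k)
    (u x y : ℕ → E) (huQ : ∀ k, u k ∈ Q) (hxQ : ∀ k, x k ∈ Q) (hyQ : ∀ k, y k ∈ Q)
    (hVsc : ∀ w, (1 / 2) * ‖w - y 0‖ ^ 2 ≤ V w)
    (φ : ℕ → E → ℝ)
    (hφ0 : ∀ w, φ 0 w = V w + α 0 * (f (y 0) + ⟪gf (y 0), w - y 0⟫ + h w))
    (hφrec : ∀ k w, φ (k + 1) w =
      φ k w + α (k + 1) * (f (y (k + 1)) + ⟪gf (y (k + 1)), w - y (k + 1)⟫ + h w))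
    (humin : ∀ k, ∀ w ∈ Q, φ k (u k) ≤ φ k w)
    (hφsc : ∀ k, ∀ w ∈ Q, φ k (u k) + (1 / 2) * ‖w - u k‖ ^ 2 ≤ φ k w)
    (hx0 : x 0 = u 0)
    (hy : ∀ k, y (k + 1) = (A (k + 1))⁻¹ • (α (k + 1) • u k + A k • x k))
    (hx : ∀ k, x (k + 1) = (A (k + 1))⁻¹ • (α (k + 1) • u (k + 1) + A k • x k))
    (hdesc0 : f (x 0) ≤ f (y 0) + ⟪gf (y 0), x 0 - y 0⟫ +
      Lc 0 / 2 * ‖x 0 - y 0‖ ^ 2 + (α 0 / A 0) * ε)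
    (hdesc : ∀ k, f (x (k + 1)) ≤ f (y (k + 1)) +
      ⟪gf (y (k + 1)), x (k + 1) - y (k + 1)⟫ +
      Lc (k + 1) / 2 * ‖x (k + 1) - y (k + 1)‖ ^ 2 + (α (k + 1) / A (k + 1)) * ε)
    (xstar : E) (hxstar : xstar ∈ Q) (R2 : ℝ) (hR2 : R2 = V xstar)
    (hmin : ∀ w ∈ Q, f xstar + h xstar ≤ f w + h w) :
    (∀ k, A k * (f (x k) + h (x k)) ≤ φ k (u k) + A k * ε) ∧
    (∀ N, (f (x N) + h (x N)) - (f xstar + h xstar) ≤ R2 / A N + ε) :=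
  stmt15_general Q f h gf ε hfconv hhconv V α A Lc hαpos hA0 hArec hAL u x y huQ hxQ hyQ hVsc φ hφ0
    hφrec humin hφsc hx0 hy hx hdesc0 hdesc xstar hxstar R2 hR2
end
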